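/- For every reactive Turing machine M, the transition system T(M) associated with M is divergence-preserving branching bisimilar to the LTS of the parallel composition of M's finite control with the tape process: T(M) ≈Δb T_{Efc ∪ E∞T}([ C_{↑,□} ∥ T_□̌ ]_{{r,w,m}}). -/

import Mathlib

namespace RTMPaper

/-! ## Labelled transition systems

An `A`-labelled transition system; transition labels are drawn from `Option A`,
where `none` plays the role of the unobservable action τ. -/

structure LTS (A : Type) where
  State : Type
  tr : State → Option A → State → Prop
  init : State
  final : Set State

namespace LTS

variable {A : Type}

/-- A τ-step. -/
def tauStep (T : LTS A) (s t : T.State) : Prop := T.tr s none t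

/-- `⇒` : the reflexive–transitive closure of τ-steps. -/
def tauReach (T : LTS A) : T.State → T.State → Prop :=
  Relation.ReflTransGen T.tauStep

/-- `s —(a)→ t` : either `s —a→ t`, or `a = τ` and `s = t`. -/
def optStep (T : LTS A) (s : T.State) (a : Option A) (t : T.State) : Prop :=
  T.tr s a t ∨ (a = none ∧ s = t)

/-- The set of outgoing transitions of a state. -/
def out (T : LTS A) (s : T.State) : Set (Option A × T.State) :=
  {p | T.tr s p.1 p.2}

def FinitelyBranching (T : LTS A) : Prop := ∀ s, (T.out s).Finite

/-- The branching degree of `T` is bounded by `B`. -/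
def BranchingDegreeBoundedBy (T : LTS A) (B : ℕ) : Prop :=
  ∀ s, (T.out s).Finite ∧ (T.out s).ncard ≤ B

def BoundedlyBranching (T : LTS A) : Prop := ∃ B, T.BranchingDegreeBoundedBy B

/-- A deterministic transition system. -/
def Deterministic (T : LTS A) : Prop :=
  (∀ s a t₁ t₂, T.tr s a t₁ → T.tr s a t₂ → t₁ = t₂) ∧
  (∀ s t, T.tr s none t → ∀ a u, T.tr s a u → a = none)

/-- Relabelling of an LTS along a map of action alphabets (τ is mapped to τ). -/
def relabel {A' : Type} (f : A → A') (T : LTS A) : LTS A' where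
  State := T.State
  tr s a t := ∃ a₀ : Option A, T.tr s a₀ t ∧ a = Option.map f a₀
  init := T.init
  final := T.final

end LTS

/-! ## (Divergence-preserving) branching bisimilarity -/

structure IsBranchingBisimulation {A : Type} (T₁ T₂ : LTS A)
    (R : T₁.State → T₂.State → Prop) : Prop where
  fwd : ∀ s₁ s₂ a s₁', R s₁ s₂ → T₁.tr s₁ a s₁' →
    ∃ s₂'' s₂', T₂.tauReach s₂ s₂'' ∧ T₂.optStep s₂'' a s₂' ∧ R s₁ s₂'' ∧ R s₁' s₂'
  bwd : ∀ s₁ s₂ a s₂', R s₁ s₂ → T₂.tr s₂ a s₂' →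
    ∃ s₁'' s₁', T₁.tauReach s₁ s₁'' ∧ T₁.optStep s₁'' a s₁' ∧ R s₁'' s₂ ∧ R s₁' s₂'
  finFwd : ∀ s₁ s₂, R s₁ s₂ → s₁ ∈ T₁.final →
    ∃ s₂', T₂.tauReach s₂ s₂' ∧ R s₁ s₂' ∧ s₂' ∈ T₂.final
  finBwd : ∀ s₁ s₂, R s₁ s₂ → s₂ ∈ T₂.final →
    ∃ s₁', T₁.tauReach s₁ s₁' ∧ R s₁' s₂ ∧ s₁' ∈ T₁.final

/-- The divergence-preservation conditions on a branching bisimulation. -/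
def DivergencePreserving {A : Type} (T₁ T₂ : LTS A)
    (R : T₁.State → T₂.State → Prop) : Prop :=
  (∀ (s₂ : T₂.State) (f : ℕ → T₁.State),
      (∀ i, T₁.tauStep (f i) (f (i + 1))) → (∀ i, R (f i) s₂) →
      ∃ s₂', Relation.TransGen T₂.tauStep s₂ s₂' ∧ ∃ i, R (f i) s₂') ∧
  (∀ (s₁ : T₁.State) (f : ℕ → T₂.State),
      (∀ i, T₂.tauStep (f i) (f (i + 1))) → (∀ i, R s₁ (f i)) →
      ∃ s₁', Relation.TransGen T₁.tauStep s₁ s₁' ∧ ∃ i, R s₁' (f i))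

/-- `T₁ ≈b T₂` : branching bisimilarity. -/
def BranchingBisimilar {A : Type} (T₁ T₂ : LTS A) : Prop :=
  ∃ R, IsBranchingBisimulation T₁ T₂ R ∧ R T₁.init T₂.init

/-- `T₁ ≈Δb T₂` : divergence-preserving branching bisimilarity. -/
def DPBranchingBisimilar {A : Type} (T₁ T₂ : LTS A) : Prop :=
  ∃ R, IsBranchingBisimulation T₁ T₂ R ∧ DivergencePreserving T₁ T₂ R ∧
    R T₁.init T₂.init

/-! ## Effective and computable transition systems -/

/-- A set of natural numbers is recursively enumerable. -/
def REset (X : Set ℕ) : Prop :=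
  ∃ f : ℕ →. Unit, Partrec f ∧ ∀ n, (f n).Dom ↔ n ∈ X

/-- A (finitely branching) LTS is computable if, with respect to some injective
codings of its labels and states into ℕ, the functions `out` and `fin` are
recursive. -/
def LTS.IsComputable {A : Type} (T : LTS A) : Prop :=
  ∃ hfb : ∀ s, (T.out s).Finite,
    ∃ (cL : Option A → ℕ) (cS : T.State → ℕ),
      Function.Injective cL ∧ Function.Injective cS ∧
      (∃ fo : ℕ → ℕ, Computable fo ∧ ∀ s,
        fo (cS s) =
          Encodable.encode
            (((hfb s).toFinset).image fun p => Nat.pair (cL p.1) (cS p.2))) ∧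
      (∃ ff : ℕ → ℕ, Computable ff ∧ ∀ s,
        (s ∈ T.final → ff (cS s) = 1) ∧ (s ∉ T.final → ff (cS s) = 0))

/-- A (finitely branching) LTS is effective if, with respect to some injective
codings of its labels and states into ℕ, its transition relation and its set of
final states are recursively enumerable. -/
def LTS.IsEffective {A : Type} (T : LTS A) : Prop :=
  T.FinitelyBranching ∧
  ∃ (cL : Option A → ℕ) (cS : T.State → ℕ),
    Function.Injective cL ∧ Function.Injective cS ∧
    REset {n | ∃ s a t, T.tr s a t ∧ n = Nat.pair (cS s) (Nat.pair (cL a) (cS t))} ∧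
    REset {n | ∃ s ∈ T.final, n = cS s}

/-! ## Reactive Turing machines -/

inductive Move : Type
  | L | R
deriving DecidableEq

instance instFintypeMove : Fintype Move where
  elems := {Move.L, Move.R}
  complete := by intro x; cases x <;> simp

/-- A tape instance: the content left of the head (nearest symbol first), the
symbol under the head, and the content right of the head (nearest symbol
first).  Tape symbols are `Option D`, with `none` the blank symbol □. -/
structure Tape (D : Type) where
  left : List (Option D)
  head : Option D
  right : List (Option D)

def Tape.empty (D : Type) : Tape D := ⟨[], none, []⟩

/-- Write `e` at the head position and move the head in direction `m`. -/
def Tape.writeMove {D : Type} (t : Tape D) (e : Option D) : Move → Tape D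
  | .L =>
    match t.left with
    | [] => ⟨[], none, e :: t.right⟩
    | x :: l => ⟨l, x, e :: t.right⟩
  | .R =>
    match t.right with
    | [] => ⟨e :: t.left, none, []⟩
    | x :: r => ⟨e :: t.left, x, r⟩

/-- A reactive Turing machine with action symbols `A` (labels `Option A`,
`none` being τ) and data symbols `D` (tape symbols `Option D`, `none` being
the blank symbol). -/
structure RTM (A D : Type) where
  Q : Type
  [instQ : Fintype Q]
  trans : Q → Option D → Option A → Option D → Move → Q → Prop
  init : Q
  final : Set Q

attribute [instance] RTM.instQ

/-- The transition system `T(M)` associated with an RTM `M`. -/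
def RTM.lts {A D : Type} (M : RTM A D) : LTS A where
  State := M.Q × Tape D
  tr c a c' := ∃ e m, M.trans c.1 c.2.head a e m c'.1 ∧ c'.2 = c.2.writeMove e m
  init := (M.init, Tape.empty D)
  final := {c | c.1 ∈ M.final}

def RTM.Deterministic {A D : Type} (M : RTM A D) : Prop :=
  (∀ s d a e₁ m₁ t₁ e₂ m₂ t₂, M.trans s d a e₁ m₁ t₁ → M.trans s d a e₂ m₂ t₂ →
      e₁ = e₂ ∧ m₁ = m₂ ∧ t₁ = t₂) ∧
  (∀ s d e₁ m₁ t₁, M.trans s d none e₁ m₁ t₁ →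
      ∀ a e₂ m₂ t₂, M.trans s d a e₂ m₂ t₂ → a = none)

/-! ## Actions over channels, and parallel composition -/

/-- Actions over a set `C` of channels with communicated values in `V`,
together with further (base) actions from `B`:  `recv c v` is `c?v`,
`send c v` is `c!v`. -/
inductive CAct (C V B : Type) : Type
  | recv : C → V → CAct C V B
  | send : C → V → CAct C V B
  | base : B → CAct C V B
deriving DecidableEq

/-- The (possibly silent) action `a` is a communication action on one of the
channels in `C'`. -/
def IsComm {C V B : Type} (C' : Set C) : Option (CAct C V B) → Prop
  | some (.recv c _) => c ∈ C'
  | some (.send c _) => c ∈ C'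
  | _ => False

/-- Parallel composition `[T₁ ∥ T₂]_{C'}` of transition systems, enforcing
communication on the channels in `C'`. -/
def parLTS {C V B : Type} (C' : Set C) (T₁ T₂ : LTS (CAct C V B)) :
    LTS (CAct C V B) where
  State := T₁.State × T₂.State
  init := (T₁.init, T₂.init)
  final := {p | p.1 ∈ T₁.final ∧ p.2 ∈ T₂.final}
  tr p a p' :=
    ¬ IsComm C' a ∧
    ((T₁.tr p.1 a p'.1 ∧ p.2 = p'.2) ∨
     (T₂.tr p.2 a p'.2 ∧ p.1 = p'.1) ∨
     (a = none ∧ ∃ c ∈ C', ∃ d : V,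
        (T₁.tr p.1 (some (.send c d)) p'.1 ∧ T₂.tr p.2 (some (.recv c d)) p'.2) ∨
        (T₁.tr p.1 (some (.recv c d)) p'.1 ∧ T₂.tr p.2 (some (.send c d)) p'.2)))

/-- The behaviour of `sender(M)`: output the symbols of `w` one by one along
channel `cu`, then halt in a final state. -/
def outputLTS {C V B : Type} (cu : C) (w : List V) : LTS (CAct C V B) where
  State := List V
  tr s a t := ∃ d, s = d :: t ∧ a = some (.send cu d)
  init := w
  final := {([] : List V)}

/-- A concrete (syntactic, Gödel-numberable) presentation of a reactive Turing
machine: states are `Fin (n+1)`, and the transition relation is a finite set of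
tuples. -/
structure RTMc (A D : Type) where
  n : ℕ
  trans : Finset (Fin (n + 1) × Option D × Option A × Option D × Move × Fin (n + 1))
  init : Fin (n + 1)
  final : Finset (Fin (n + 1))

def RTMc.toRTM {A D : Type} (M : RTMc A D) : RTM A D where
  Q := Fin (M.n + 1)
  trans s d a e m t := (s, d, a, e, m, t) ∈ M.trans
  init := M.init
  final := (↑M.final : Set (Fin (M.n + 1)))

end RTMPaper

namespace RTMPaper

/-! ## A process calculus (TCP_τ without sequential composition) -/

/-- Process expressions: deadlock `0`, skip `1`, action prefix, alternative
composition, parallel composition (enforcing communication on a set of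
channels), and names. -/
inductive PExp (C V B N : Type) : Type
  | dl : PExp C V B N
  | emp : PExp C V B N
  | pref : Option (CAct C V B) → PExp C V B N → PExp C V B N
  | alt : PExp C V B N → PExp C V B N → PExp C V B N
  | par : Set C → PExp C V B N → PExp C V B N → PExp C V B N
  | name : N → PExp C V B N

namespace PExp

def names {C V B N : Type} : PExp C V B N → Set N
  | .dl => ∅
  | .emp => ∅
  | .pref _ p => p.names
  | .alt p q => p.names ∪ q.names
  | .par _ p q => p.names ∪ q.names
  | .name n => {n}

def mapNames {C V B N N' : Type} (f : N → N') : PExp C V B N → PExp C V B N'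
  | .dl => .dl
  | .emp => .emp
  | .pref a p => .pref a (p.mapNames f)
  | .alt p q => .alt (p.mapNames f) (q.mapNames f)
  | .par C' p q => .par C' (p.mapNames f) (q.mapNames f)
  | .name n => .name (f n)

end PExp

/-- A recursive specification over the names `N` is a partial map from names to
process expressions (the defining equations). -/
def SpecWF {C V B N : Type} (E : N → Option (PExp C V B N)) : Prop :=
  ∀ n p, E n = some p → ∀ m ∈ PExp.names p, (E m).isSome

/-- All names occurring in `p` have a defining equation in `E`. -/
def DefinedIn {C V B N : Type} (E : N → Option (PExp C V B N))
    (p : PExp C V B N) : Prop :=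
  ∀ m ∈ PExp.names p, (E m).isSome

/-- The termination predicate `↓` of the structural operational semantics. -/
inductive Term {C V B N : Type} (E : N → Option (PExp C V B N)) :
    PExp C V B N → Prop
  | emp : Term E .emp
  | altL {p q} : Term E p → Term E (.alt p q)
  | altR {p q} : Term E q → Term E (.alt p q)
  | par {C' p q} : Term E p → Term E q → Term E (.par C' p q)
  | name {n p} : E n = some p → Term E p → Term E (.name n)

/-- The transition relation of the structural operational semantics. -/
inductive Step {C V B N : Type} (E : N → Option (PExp C V B N)) :
    PExp C V B N → Option (CAct C V B) → PExp C V B N → Prop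
  | pref {a p} : Step E (.pref a p) a p
  | altL {p q a p'} : Step E p a p' → Step E (.alt p q) a p'
  | altR {p q a q'} : Step E q a q' → Step E (.alt p q) a q'
  | parL {C' p q a p'} : Step E p a p' → ¬ IsComm C' a →
      Step E (.par C' p q) a (.par C' p' q)
  | parR {C' p q a q'} : Step E q a q' → ¬ IsComm C' a →
      Step E (.par C' p q) a (.par C' p q')
  | syncSR {C' : Set C} {p q p' q' c d} : c ∈ C' →
      Step E p (some (.send c d)) p' → Step E q (some (.recv c d)) q' →
      Step E (.par C' p q) none (.par C' p' q')
  | syncRS {C' : Set C} {p q p' q' c d} : c ∈ C' →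
      Step E p (some (.recv c d)) p' → Step E q (some (.send c d)) q' →
      Step E (.par C' p q) none (.par C' p' q')
  | name {n p a p'} : E n = some p → Step E p a p' → Step E (.name n) a p'

/-- The process expressions reachable from `p` under the semantics of `E`. -/
def Reach {C V B N : Type} (E : N → Option (PExp C V B N))
    (p : PExp C V B N) : Set (PExp C V B N) :=
  {q | Relation.ReflTransGen (fun x y => ∃ a, Step E x a y) p q}

/-- The transition system `T_E(p)` associated with the process expression `p`
and the recursive specification `E`. -/
def pLTS {C V B N : Type} (E : N → Option (PExp C V B N))
    (p : PExp C V B N) : LTS (CAct C V B) where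
  State := {q // q ∈ Reach E p}
  tr s a t := Step E s.1 a t.1
  init := ⟨p, Relation.ReflTransGen.refl⟩
  final := {s | Term E s.1}

/-- A deterministic internal computation from `s` to `s'` with respect to a
transition relation `tr`. -/
def DetInternalComp {S A : Type} (tr : S → Option A → S → Prop)
    (s s' : S) : Prop :=
  ∃ (n : ℕ) (f : ℕ → S), f 0 = s ∧ f n = s' ∧
    (∀ i < n, tr (f i) none (f (i + 1))) ∧
    (∀ i < n, ∀ a u, tr (f i) a u → a = none ∧ u = f (i + 1))

/-! ### Finite sums of process expressions -/

def bigAlt {C V B N : Type} (l : List (PExp C V B N)) : PExp C V B N :=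
  l.foldr PExp.alt PExp.dl

/-- `Σ_{x ∈ l} f x`. -/
def sumList {C V B N ι : Type} (l : List ι) (f : ι → PExp C V B N) :
    PExp C V B N :=
  bigAlt (l.map f)

/-- The list of all elements of a finite type. -/
noncomputable def allOf (ι : Type) [Fintype ι] : List ι := Finset.univ.toList

/-- The disjoint union of two recursive specifications. -/
def combineSpec {C V B N₁ N₂ : Type}
    (E₁ : N₁ → Option (PExp C V B N₁)) (E₂ : N₂ → Option (PExp C V B N₂)) :
    N₁ ⊕ N₂ → Option (PExp C V B (N₁ ⊕ N₂))
  | .inl n => (E₁ n).map (PExp.mapNames Sum.inl)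
  | .inr n => (E₂ n).map (PExp.mapNames Sum.inr)

/-! ### Queue specifications -/

/-- The infinite specification `E∞Q` of a FIFO queue over the alphabet `al`
with input channel `ci` and output channel `co`; the name of a state of the
queue is its contents (a string, insertion at the left, removal at the
right). -/
def infQueueSpec (C B V : Type) (al : List V) (ci co : C) :
    List V → Option (PExp C V B (List V)) := fun l =>
  some <|
    match l.getLast? with
    | none =>
        .alt (sumList al fun d => .pref (some (.recv ci d)) (.name [d])) .emp
    | some d =>
        .alt (.alt (.pref (some (.send co d)) (.name l.dropLast))
          (sumList al fun e => .pref (some (.recv ci e)) (.name (e :: l)))) .emp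

/-- The finite Bergstra–Klop queue specification `EQ` (with added `1`-summands):
for channels `(j,k,p)`,
`Q^{jk}_p ≝ Σ_d j?d.[ Q^{jp}_k ∥ (1 + k!d.Q^{pk}_j) ]_{{p}} + 1`. -/
def bkQueueSpec (C B V : Type) (al : List V) :
    C × C × C → Option (PExp C V B (C × C × C)) := fun jkp =>
  some <| .alt
    (sumList al fun d => .pref (some (.recv jkp.1 d))
      (.par {jkp.2.2} (.name (jkp.1, jkp.2.2, jkp.2.1))
        (.alt .emp (.pref (some (.send jkp.2.1 d)) (.name (jkp.2.2, jkp.2.1, jkp.1))))))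
    .emp

/-! ### Tape specifications -/

/-- Symbols communicated in the tape/queue specifications: tape symbols
(`dat d` for `d ∈ D□`), the fresh symbols `⊥` and `$`, and the move
instructions `L` and `R`. -/
inductive Sym (D : Type) : Type
  | dat : Option D → Sym D
  | bot : Sym D
  | dollar : Sym D
  | mvL : Sym D
  | mvR : Sym D
deriving DecidableEq

instance {D : Type} [Fintype D] [DecidableEq D] : Fintype (Sym D) where
  elems := ((Finset.univ : Finset (Option D)).image Sym.dat) ∪
    {Sym.bot, Sym.dollar, Sym.mvL, Sym.mvR}
  complete := by intro x; cases x <;> simp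

/-- The queue alphabet `D□ ∪ {⊥, $}`. -/
noncomputable def qAlphList (D : Type) [Fintype D] [DecidableEq D] : List (Sym D) :=
  ((Finset.univ : Finset (Sym D)).filter fun v => v ≠ Sym.mvL ∧ v ≠ Sym.mvR).toList

def dmap {D : Type} (l : List (Option D)) : List (Sym D) := l.map Sym.dat

def movSym {D : Type} : Move → Sym D
  | .L => .mvL
  | .R => .mvR

/-- Names of the finite tape-controller specification `ET`. -/
inductive TName (D : Type) : Type
  | H : Option D → TName D
  | HL : Option D → TName D
  | HR : Option D → TName D
  | Back : TName D
  | Fwd : Option D → TName D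
  | FwdBot : TName D

/-- The finite tape-controller specification `ET`, with read channel `cr`,
write channel `cw`, move channel `cm`, and a queue interface on channels
`ci` (insert) and `co` (remove). -/
noncomputable def tapeCtrlSpec (C D B : Type) [Fintype D] (ci co cr cw cm : C) :
    TName D → Option (PExp C (Sym D) B (TName D))
  | .H d => some <| .alt (.alt (.alt (.alt
      (.pref (some (.send cr (.dat d))) (.name (.H d)))
      (sumList (allOf (Option D)) fun e =>
        .pref (some (.recv cw (.dat e))) (.name (.H e))))
      (.pref (some (.recv cm .mvL)) (.name (.HL d))))
      (.pref (some (.recv cm .mvR)) (.name (.HR d))))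
      .emp
  | .HL d => some <| .pref (some (.send ci (.dat d)))
      (.alt (sumList (allOf (Option D)) fun e =>
          .pref (some (.recv co (.dat e))) (.name (.H e)))
        (.pref (some (.recv co .bot))
          (.pref (some (.send ci .dollar))
            (.pref (some (.send ci .bot)) (.name .Back)))))
  | .Back => some <| .alt
      (sumList (allOf (Option D)) fun d =>
        .pref (some (.recv co (.dat d)))
          (.pref (some (.send ci (.dat d))) (.name .Back)))
      (.pref (some (.recv co .dollar)) (.name (.H none)))
  | .HR d => some <| .pref (some (.send ci .dollar))
      (.pref (some (.send ci (.dat d)))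
        (.alt (sumList (allOf (Option D)) fun e =>
            .pref (some (.recv co (.dat e))) (.name (.Fwd e)))
          (.pref (some (.recv co .bot)) (.name .FwdBot))))
  | .Fwd d => some <| .alt (.alt
      (sumList (allOf (Option D)) fun e =>
        .pref (some (.recv co (.dat e)))
          (.pref (some (.send ci (.dat d))) (.name (.Fwd e))))
      (.pref (some (.recv co .bot))
        (.pref (some (.send ci (.dat d))) (.name .FwdBot))))
      (.pref (some (.recv co .dollar)) (.name (.H d)))
  | .FwdBot => some <| .alt
      (sumList (allOf (Option D)) fun e =>
        .pref (some (.recv co (.dat e)))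
          (.pref (some (.send ci .bot)) (.name (.Fwd e))))
      (.pref (some (.recv co .dollar))
        (.pref (some (.send ci .bot)) (.name (.H none))))

/-- The infinite tape specification `E∞T`: one name for every tape instance,
with read channel `cr`, write channel `cw` and move channel `cm`. -/
noncomputable def infTapeSpec (C B D : Type) [Fintype D] (cr cw cm : C) :
    Tape D → Option (PExp C (Sym D) B (Tape D)) := fun t =>
  some <| .alt (.alt (.alt (.alt
    (.pref (some (.send cr (.dat t.head))) (.name t))
    (sumList (allOf (Option D)) fun e =>
      .pref (some (.recv cw (.dat e))) (.name ⟨t.left, e, t.right⟩)))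
    (.pref (some (.recv cm .mvL)) (.name (t.writeMove t.head .L))))
    (.pref (some (.recv cm .mvR)) (.name (t.writeMove t.head .R))))
    .emp

/-- The finite-control specification `Efc` of an RTM `M`:
`C_{s,d} ≝ Σ_{(s,d,a,e,Mv,t) ∈ →} a.w!e.m!Mv.Σ_{f∈D□} r?f.C_{t,f}`,
with an additional summand `1` iff `s` is a final state of `M`. -/
noncomputable def fcSpec {C D B : Type} [Fintype D] [Fintype B]
    (M : RTM B D) (cr cw cm : C) :
    M.Q × Option D → Option (PExp C (Sym D) B (M.Q × Option D)) := fun sd =>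
  let base : PExp C (Sym D) B (M.Q × Option D) :=
    bigAlt ((((Set.toFinite {x : Option B × Option D × Move × M.Q |
        M.trans sd.1 sd.2 x.1 x.2.1 x.2.2.1 x.2.2.2}).toFinset).toList).map fun x =>
      .pref (Option.map CAct.base x.1)
        (.pref (some (.send cw (.dat x.2.1)))
          (.pref (some (.send cm (movSym x.2.2.1)))
            (sumList (allOf (Option D)) fun f =>
              .pref (some (.recv cr (.dat f))) (.name (x.2.2.2, f))))))
  haveI := Classical.propDecidable (sd.1 ∈ M.final)
  some (if sd.1 ∈ M.final then .alt base .emp else base)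

end RTMPaper

namespace RTMPaper

/-- The finite-control specification of the RTM `M` combined with the infinite
tape specification. -/
noncomputable def EfcT {C D B : Type} [Fintype D] [Fintype B]
    (M : RTM B D) (cr cw cm : C) :
    ((M.Q × Option D) ⊕ Tape D) →
      Option (PExp C (Sym D) B ((M.Q × Option D) ⊕ Tape D)) :=
  combineSpec (fcSpec M cr cw cm) (infTapeSpec C B D cr cw cm)

/-!
A transition `(s, δ) —a→ (t, δ')` of `T(M)` is performed by the composite in four steps: the
control performs `a`, and then writes, moves and reads by synchronising with the tape, each time
in the only possible way. So the composite with control `C_{s,d}` and tape `δ`, where `d` is the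
symbol under the head of `δ`, represents the configuration `(s, δ)`, and every other reachable
composite represents the configuration it will reach after its remaining one, two or three
forced τ-steps. This relation is a branching bisimulation, and it preserves divergence because
the forced τ-sequences are finite.
-/

/-- `T₂` performs every transition of `T₁` followed by finitely many forced τ-steps:
`R n s q` says that `q` represents `s` once it has performed `n` further forced τ-steps. -/
structure IsTauExpansion {A : Type} (T₁ T₂ : LTS A) (R : ℕ → T₁.State → T₂.State → Prop) :
    Prop where
  fwd {s s' q a} : R 0 s q → T₁.tr s a s' → ∃ q' n, T₂.tr q a q' ∧ R n s' q'
  bwd {s q q' a} : R 0 s q → T₂.tr q a q' → ∃ s' n, T₁.tr s a s' ∧ R n s' q'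
  final_iff {s q} : R 0 s q → (s ∈ T₁.final ↔ q ∈ T₂.final)
  exists_tauStep {n s q} : R (n + 1) s q → ∃ q', T₂.tauStep q q'
  tauStep_of_tr {n s q q' a} : R (n + 1) s q → T₂.tr q a q' → a = none ∧ R n s q'
  not_final {n s q} : R (n + 1) s q → q ∉ T₂.final

namespace IsTauExpansion

variable {A : Type} {T₁ T₂ : LTS A} {R : ℕ → T₁.State → T₂.State → Prop}

theorem exists_tauReach (h : IsTauExpansion T₁ T₂ R) :
    ∀ {n s q}, R n s q → ∃ q', T₂.tauReach q q' ∧ R 0 s q'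
  | 0, _, _, hq => ⟨_, .refl, hq⟩
  | _ + 1, _, _, hq => by
    obtain ⟨q₁, hq₁⟩ := h.exists_tauStep hq
    obtain ⟨q', hreach, hq'⟩ := h.exists_tauReach (h.tauStep_of_tr hq hq₁).2
    exact ⟨q', .head hq₁ hreach, hq'⟩

theorem zero_of_tauChain (h : IsTauExpansion T₁ T₂ R) {s : T₁.State} {f : ℕ → T₂.State}
    (hf : ∀ i, T₂.tauStep (f i) (f (i + 1))) :
    ∀ {n i}, R n s (f i) → R 0 s (f (i + n))
  | 0, _, hR => hR
  | n + 1, i, hR => by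
    have := h.zero_of_tauChain hf (h.tauStep_of_tr hR (hf i)).2
    rwa [Nat.add_right_comm, Nat.add_assoc] at this

theorem isBranchingBisimulation (h : IsTauExpansion T₁ T₂ R) :
    IsBranchingBisimulation T₁ T₂ fun s q => ∃ n, R n s q where
  fwd _ _ _ _ := fun ⟨_, hq⟩ hs => by
    obtain ⟨q₀, hreach, hq₀⟩ := h.exists_tauReach hq
    obtain ⟨q', m, hq₀q', hq'⟩ := h.fwd hq₀ hs
    exact ⟨q₀, q', hreach, .inl hq₀q', ⟨0, hq₀⟩, ⟨m, hq'⟩⟩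
  bwd s _ _ _ := fun ⟨n, hq⟩ hqq' => by
    cases n with
    | zero =>
      obtain ⟨s', m, hs, hq'⟩ := h.bwd hq hqq'
      exact ⟨s, s', .refl, .inl hs, ⟨0, hq⟩, ⟨m, hq'⟩⟩
    | succ n =>
      obtain ⟨rfl, hq'⟩ := h.tauStep_of_tr hq hqq'
      exact ⟨s, s, .refl, .inr ⟨rfl, rfl⟩, ⟨n + 1, hq⟩, ⟨n, hq'⟩⟩
  finFwd _ _ := fun ⟨_, hq⟩ hs => by
    obtain ⟨q₀, hreach, hq₀⟩ := h.exists_tauReach hq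
    exact ⟨q₀, hreach, ⟨0, hq₀⟩, (h.final_iff hq₀).1 hs⟩
  finBwd s _ := fun ⟨n, hq⟩ hfin => by
    cases n with
    | zero => exact ⟨s, .refl, ⟨0, hq⟩, (h.final_iff hq).2 hfin⟩
    | succ n => exact absurd hfin (h.not_final hq)

theorem divergencePreserving (h : IsTauExpansion T₁ T₂ R) :
    DivergencePreserving T₁ T₂ fun s q => ∃ n, R n s q := by
  constructor
  · intro q f hf hR
    obtain ⟨n, hq⟩ := hR 0
    cases n with
    | zero =>
      obtain ⟨q', m, hqq', hq'⟩ := h.fwd hq (hf 0)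
      exact ⟨q', .single hqq', 1, m, hq'⟩
    | succ n =>
      obtain ⟨q', hqq'⟩ := h.exists_tauStep hq
      exact ⟨q', .single hqq', 0, n, (h.tauStep_of_tr hq hqq').2⟩
  · intro s f hf hR
    obtain ⟨n, hq⟩ := hR 0
    obtain ⟨s', m, hs, hq'⟩ := h.bwd (h.zero_of_tauChain hf hq) (hf (0 + n))
    exact ⟨s', .single hs, 0 + n + 1, m, hq'⟩

theorem dpBranchingBisimilar (h : IsTauExpansion T₁ T₂ R) {n : ℕ}
    (hinit : R n T₁.init T₂.init) : DPBranchingBisimilar T₁ T₂ :=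
  ⟨_, h.isBranchingBisimulation, h.divergencePreserving, n, hinit⟩

end IsTauExpansion

section Semantics

variable {C V B N : Type} {E : N → Option (PExp C V B N)}

@[simp] theorem step_pref_iff {a p b q} : Step E (.pref a p) b q ↔ b = a ∧ q = p :=
  ⟨fun h => by cases h; exact ⟨rfl, rfl⟩, by rintro ⟨rfl, rfl⟩; exact .pref⟩

@[simp] theorem step_alt_iff {p q a r} :
    Step E (.alt p q) a r ↔ Step E p a r ∨ Step E q a r :=
  ⟨fun h => by cases h <;> simp_all, fun h => h.elim .altL .altR⟩

@[simp] theorem not_step_emp {a r} : ¬ Step E .emp a r := nofun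

@[simp] theorem not_step_dl {a r} : ¬ Step E .dl a r := nofun

theorem step_name_iff {n a r} : Step E (.name n) a r ↔ ∃ p, E n = some p ∧ Step E p a r :=
  ⟨fun h => by cases h with | name hE h => exact ⟨_, hE, h⟩, fun ⟨_, hE, h⟩ => .name hE h⟩

@[simp] theorem step_bigAlt_iff {l : List (PExp C V B N)} {a r} :
    Step E (bigAlt l) a r ↔ ∃ q ∈ l, Step E q a r := by
  induction l with
  | nil => simp [bigAlt]
  | cons x l ih => simp [bigAlt, ← ih]

@[simp] theorem step_sumList_iff {ι : Type} {l : List ι} {f : ι → PExp C V B N} {a r} :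
    Step E (sumList l f) a r ↔ ∃ x ∈ l, Step E (f x) a r := by
  simp [sumList]

@[simp] theorem not_term_pref {a p} : ¬ Term E (.pref a p) := nofun

@[simp] theorem not_term_dl : ¬ Term E (.dl : PExp C V B N) := nofun

@[simp] theorem term_emp : Term E (.emp : PExp C V B N) := .emp

@[simp] theorem term_alt_iff {p q} : Term E (.alt p q) ↔ Term E p ∨ Term E q :=
  ⟨fun h => by cases h <;> simp_all, fun h => h.elim .altL .altR⟩

@[simp] theorem term_par_iff {C' p q} : Term E (.par C' p q) ↔ Term E p ∧ Term E q :=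
  ⟨fun h => by cases h with | par h₁ h₂ => exact ⟨h₁, h₂⟩, fun ⟨h₁, h₂⟩ => .par h₁ h₂⟩

theorem term_name_iff {n} : Term E (.name n) ↔ ∃ p, E n = some p ∧ Term E p :=
  ⟨fun h => by cases h with | name hE h => exact ⟨_, hE, h⟩, fun ⟨_, hE, h⟩ => .name hE h⟩

@[simp] theorem term_bigAlt_iff {l : List (PExp C V B N)} :
    Term E (bigAlt l) ↔ ∃ q ∈ l, Term E q := by
  induction l with
  | nil => simp [bigAlt]
  | cons x l ih => simp [bigAlt, ← ih]

@[simp] theorem term_sumList_iff {ι : Type} {l : List ι} {f : ι → PExp C V B N} :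
    Term E (sumList l f) ↔ ∃ x ∈ l, Term E (f x) := by
  simp [sumList]

theorem step_par_iff {C' : Set C} {p q : PExp C V B N} {a r} :
    Step E (.par C' p q) a r ↔
      (¬ IsComm C' a ∧ ∃ p', Step E p a p' ∧ r = .par C' p' q) ∨
      (¬ IsComm C' a ∧ ∃ q', Step E q a q' ∧ r = .par C' p q') ∨
      (a = none ∧ ∃ c ∈ C', ∃ d p' q', r = .par C' p' q' ∧
        ((Step E p (some (.send c d)) p' ∧ Step E q (some (.recv c d)) q') ∨
         (Step E p (some (.recv c d)) p' ∧ Step E q (some (.send c d)) q'))) := by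
  constructor
  · intro h
    cases h with
    | parL h hnc => exact .inl ⟨hnc, _, h, rfl⟩
    | parR h hnc => exact .inr (.inl ⟨hnc, _, h, rfl⟩)
    | syncSR hc hp hq => exact .inr (.inr ⟨rfl, _, hc, _, _, _, rfl, .inl ⟨hp, hq⟩⟩)
    | syncRS hc hp hq => exact .inr (.inr ⟨rfl, _, hc, _, _, _, rfl, .inr ⟨hp, hq⟩⟩)
  · rintro (⟨hnc, _, h, rfl⟩ | ⟨hnc, _, h, rfl⟩ |
      ⟨rfl, _, hc, _, _, _, rfl, (⟨hp, hq⟩ | ⟨hp, hq⟩)⟩)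
    exacts [.parL h hnc, .parR h hnc, .syncSR hc hp hq, .syncRS hc hp hq]

def OnlyComm (E : N → Option (PExp C V B N)) (C' : Set C) (p : PExp C V B N) : Prop :=
  ∀ a p', Step E p a p' → IsComm C' a

def NoComm (E : N → Option (PExp C V B N)) (C' : Set C) (p : PExp C V B N) : Prop :=
  ∀ a p', Step E p a p' → ¬ IsComm C' a

theorem step_par_iff_of_noComm_of_onlyComm {C' : Set C} {p q : PExp C V B N} {a r}
    (hp : NoComm E C' p) (hq : OnlyComm E C' q) :
    Step E (.par C' p q) a r ↔ ∃ p', Step E p a p' ∧ r = .par C' p' q := by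
  rw [step_par_iff]
  constructor
  · rintro (h | ⟨hnc, _, hq', -⟩ | ⟨-, _, hc, _, _, _, -, (⟨hp', -⟩ | ⟨hp', -⟩)⟩)
    · exact h.2
    · exact absurd (hq _ _ hq') hnc
    · exact absurd hc (hp _ _ hp')
    · exact absurd hc (hp _ _ hp')
  · rintro ⟨p', hp', rfl⟩
    exact .inl ⟨hp _ _ hp', p', hp', rfl⟩

theorem step_par_iff_of_onlyComm {C' : Set C} {p q : PExp C V B N} {a r}
    (hp : OnlyComm E C' p) (hq : OnlyComm E C' q) :
    Step E (.par C' p q) a r ↔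
      a = none ∧ ∃ c ∈ C', ∃ d p' q', r = .par C' p' q' ∧
        ((Step E p (some (.send c d)) p' ∧ Step E q (some (.recv c d)) q') ∨
         (Step E p (some (.recv c d)) p' ∧ Step E q (some (.send c d)) q')) := by
  rw [step_par_iff]
  constructor
  · rintro (⟨hnc, _, hp', -⟩ | ⟨hnc, _, hq', -⟩ | h)
    · exact absurd (hp _ _ hp') hnc
    · exact absurd (hq _ _ hq') hnc
    · exact h
  · exact .inr ∘ .inr

theorem mapNames_bigAlt {N' : Type} (f : N → N') (l : List (PExp C V B N)) :
    (bigAlt l).mapNames f = bigAlt (l.map (PExp.mapNames f)) := by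
  induction l with
  | nil => rfl
  | cons x l ih => exact congrArg (PExp.alt (x.mapNames f)) ih

@[simp] theorem mapNames_sumList {N' ι : Type} (f : N → N') (l : List ι)
    (g : ι → PExp C V B N) :
    (sumList l g).mapNames f = sumList l fun x => (g x).mapNames f := by
  simp [sumList, mapNames_bigAlt, Function.comp_def]

def sosLTS (E : N → Option (PExp C V B N)) (p : PExp C V B N) : LTS (CAct C V B) where
  State := PExp C V B N
  tr := Step E
  init := p
  final := {q | Term E q}

theorem IsTauExpansion.pLTS {T : LTS (CAct C V B)} {p : PExp C V B N}
    {R : ℕ → T.State → PExp C V B N → Prop} (h : IsTauExpansion T (sosLTS E p) R) :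
    IsTauExpansion T (pLTS E p) fun n s q => R n s q.1 where
  fwd {_ _ q _} hq hs :=
    let ⟨_, n, hstep, hq'⟩ := h.fwd hq hs
    ⟨⟨_, .tail q.2 ⟨_, hstep⟩⟩, n, hstep, hq'⟩
  bwd hq hstep := h.bwd hq hstep
  final_iff hq := h.final_iff hq
  exists_tauStep {_ _ q} hq :=
    let ⟨_, hstep⟩ := h.exists_tauStep hq
    ⟨⟨_, .tail q.2 ⟨_, hstep⟩⟩, hstep⟩
  tauStep_of_tr hq hstep := h.tauStep_of_tr hq hstep
  not_final hq := h.not_final hq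

end Semantics

@[simp] theorem mem_allOf {ι : Type} [Fintype ι] (x : ι) : x ∈ allOf ι := by
  simp [allOf]

abbrev Proc (C : Type) {D B : Type} (M : RTM B D) : Type :=
  PExp C (Sym D) B ((M.Q × Option D) ⊕ Tape D)

/-- `[p ∥ T_tp]_{r,w,m}` -/
def withTape {C D B : Type} (cr cw cm : C) (M : RTM B D) (p : Proc C M) (tp : Tape D) :
    Proc C M :=
  .par {cr, cw, cm} p (.name (.inr tp))

section FiniteControl

variable {C D B : Type} [Fintype D] (cr cw cm : C) (M : RTM B D)

noncomputable def ctrlRead (t : M.Q) : Proc C M :=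
  sumList (allOf (Option D)) fun f => .pref (some (.recv cr (.dat f))) (.name (.inl (t, f)))

noncomputable def ctrlMove (mv : Move) (t : M.Q) : Proc C M :=
  .pref (some (.send cm (movSym mv))) (ctrlRead cr M t)

noncomputable def ctrlWrite (e : Option D) (mv : Move) (t : M.Q) : Proc C M :=
  .pref (some (.send cw (.dat e))) (ctrlMove cr cm M mv t)

/-- `Phase n c p`: the composite `p` still has `n` internal steps (write, move, read) to
perform before it represents the configuration `c`. -/
inductive Phase : ℕ → M.Q × Tape D → Proc C M → Prop
  | idle (s : M.Q) (tp : Tape D) :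
      Phase 0 (s, tp) (withTape cr cw cm M (.name (.inl (s, tp.head))) tp)
  | write (e : Option D) (mv : Move) (t : M.Q) (tp : Tape D) :
      Phase 3 (t, tp.writeMove e mv) (withTape cr cw cm M (ctrlWrite cr cw cm M e mv t) tp)
  | move (mv : Move) (t : M.Q) (tp : Tape D) :
      Phase 2 (t, tp.writeMove tp.head mv) (withTape cr cw cm M (ctrlMove cr cm M mv t) tp)
  | read (t : M.Q) (tp : Tape D) :
      Phase 1 (t, tp) (withTape cr cw cm M (ctrlRead cr M t) tp)

variable {cr cw cm M} [Fintype B]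

theorem step_ctrl_iff {s : M.Q} {d : Option D} {a r} :
    Step (EfcT M cr cw cm) (.name (.inl (s, d))) a r ↔
      ∃ b e mv t, M.trans s d b e mv t ∧ a = b.map CAct.base ∧
        r = ctrlWrite cr cw cm M e mv t := by
  rw [step_name_iff]
  by_cases hfin : s ∈ M.final <;>
    simp [EfcT, combineSpec, fcSpec, hfin, mapNames_bigAlt, PExp.mapNames, ctrlWrite, ctrlMove,
      ctrlRead]

theorem step_tape_iff {tp : Tape D} {a r} :
    Step (EfcT M cr cw cm) (.name (.inr tp)) a r ↔
      (a = some (.send cr (.dat tp.head)) ∧ r = .name (.inr tp)) ∨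
      (∃ e, a = some (.recv cw (.dat e)) ∧ r = .name (.inr ⟨tp.left, e, tp.right⟩)) ∨
      (a = some (.recv cm .mvL) ∧ r = .name (.inr (tp.writeMove tp.head .L))) ∨
      (a = some (.recv cm .mvR) ∧ r = .name (.inr (tp.writeMove tp.head .R))) := by
  rw [step_name_iff]
  simp [EfcT, combineSpec, infTapeSpec, PExp.mapNames, or_assoc]

theorem term_ctrl_iff {s : M.Q} {d : Option D} :
    Term (EfcT M cr cw cm) (.name (.inl (s, d))) ↔ s ∈ M.final := by
  rw [term_name_iff]
  by_cases hfin : s ∈ M.final <;>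
    simp [EfcT, combineSpec, fcSpec, hfin, mapNames_bigAlt, PExp.mapNames]

theorem term_tape (tp : Tape D) : Term (EfcT M cr cw cm) (.name (.inr tp)) := by
  rw [term_name_iff]
  simp [EfcT, combineSpec, infTapeSpec, PExp.mapNames]

theorem onlyComm_tape (tp : Tape D) :
    OnlyComm (EfcT M cr cw cm) {cr, cw, cm} (.name (.inr tp)) := by
  intro a r h
  rcases step_tape_iff.1 h with ⟨rfl, -⟩ | ⟨_, rfl, -⟩ | ⟨rfl, -⟩ | ⟨rfl, -⟩ <;> simp [IsComm]

theorem noComm_ctrl (s : M.Q) (d : Option D) :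
    NoComm (EfcT M cr cw cm) {cr, cw, cm} (.name (.inl (s, d))) := by
  intro a r h
  obtain ⟨b, -, -, -, -, rfl, -⟩ := step_ctrl_iff.1 h
  cases b <;> exact id

theorem onlyComm_ctrlRead (t : M.Q) :
    OnlyComm (EfcT M cr cw cm) {cr, cw, cm} (ctrlRead cr M t) := by
  intro a r h
  simp only [ctrlRead, step_sumList_iff, step_pref_iff] at h
  obtain ⟨_, -, rfl, -⟩ := h
  simp [IsComm]

theorem onlyComm_ctrlMove (mv : Move) (t : M.Q) :
    OnlyComm (EfcT M cr cw cm) {cr, cw, cm} (ctrlMove cr cm M mv t) := by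
  intro a r h
  obtain ⟨rfl, -⟩ := step_pref_iff.1 h
  simp [IsComm]

theorem onlyComm_ctrlWrite (e : Option D) (mv : Move) (t : M.Q) :
    OnlyComm (EfcT M cr cw cm) {cr, cw, cm} (ctrlWrite cr cw cm M e mv t) := by
  intro a r h
  obtain ⟨rfl, -⟩ := step_pref_iff.1 h
  simp [IsComm]

theorem step_withTape_ctrl_iff {s : M.Q} {d : Option D} {tp : Tape D} {a r} :
    Step (EfcT M cr cw cm) (withTape cr cw cm M (.name (.inl (s, d))) tp) a r ↔
      ∃ b e mv t, M.trans s d b e mv t ∧ a = b.map CAct.base ∧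
        r = withTape cr cw cm M (ctrlWrite cr cw cm M e mv t) tp := by
  rw [withTape, step_par_iff_of_noComm_of_onlyComm (noComm_ctrl s d) (onlyComm_tape tp)]
  simp [step_ctrl_iff, withTape, and_assoc]

theorem step_withTape_ctrlWrite_iff {e : Option D} {mv : Move} {t : M.Q} {tp : Tape D} {a r} :
    Step (EfcT M cr cw cm) (withTape cr cw cm M (ctrlWrite cr cw cm M e mv t) tp) a r ↔
      a = none ∧ r = withTape cr cw cm M (ctrlMove cr cm M mv t) ⟨tp.left, e, tp.right⟩ := by
  rw [withTape, step_par_iff_of_onlyComm (onlyComm_ctrlWrite e mv t) (onlyComm_tape tp)]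
  simp +contextual [step_tape_iff, withTape, ctrlWrite]

theorem step_withTape_ctrlMove_iff {mv : Move} {t : M.Q} {tp : Tape D} {a r} :
    Step (EfcT M cr cw cm) (withTape cr cw cm M (ctrlMove cr cm M mv t) tp) a r ↔
      a = none ∧ r = withTape cr cw cm M (ctrlRead cr M t) (tp.writeMove tp.head mv) := by
  rw [withTape, step_par_iff_of_onlyComm (onlyComm_ctrlMove mv t) (onlyComm_tape tp)]
  cases mv <;> simp +contextual [step_tape_iff, withTape, ctrlMove, movSym]

theorem step_withTape_ctrlRead_iff {t : M.Q} {tp : Tape D} {a r} :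
    Step (EfcT M cr cw cm) (withTape cr cw cm M (ctrlRead cr M t) tp) a r ↔
      a = none ∧ r = withTape cr cw cm M (.name (.inl (t, tp.head))) tp := by
  rw [withTape, step_par_iff_of_onlyComm (onlyComm_ctrlRead t) (onlyComm_tape tp)]
  simp [step_tape_iff, withTape, ctrlRead]

theorem isTauExpansion_phase (P : Proc C M) :
    IsTauExpansion (M.lts.relabel (CAct.base : B → CAct C (Sym D) B))
      (sosLTS (EfcT M cr cw cm) P) (Phase cr cw cm M) where
  fwd := by
    rintro _ ⟨t, _⟩ _ _ ⟨s, tp⟩ ⟨b, ⟨e, mv, htr, rfl⟩, rfl⟩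
    exact ⟨_, 3, step_withTape_ctrl_iff.2 ⟨b, e, mv, t, htr, rfl, rfl⟩, .write e mv t tp⟩
  bwd := by
    rintro _ _ _ _ ⟨s, tp⟩ hstep
    obtain ⟨b, e, mv, t, htr, rfl, rfl⟩ := step_withTape_ctrl_iff.1 hstep
    exact ⟨(t, tp.writeMove e mv), 3, ⟨b, ⟨e, mv, htr, rfl⟩, rfl⟩, .write e mv t tp⟩
  final_iff := by
    rintro _ _ ⟨s, tp⟩
    change s ∈ M.final ↔ Term _ (withTape cr cw cm M _ tp)
    simp [withTape, term_ctrl_iff, term_tape]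
  exists_tauStep := by
    rintro _ _ _ (_ | ⟨e, mv, t, tp⟩ | ⟨mv, t, tp⟩ | ⟨t, tp⟩)
    exacts [⟨_, step_withTape_ctrlWrite_iff.2 ⟨rfl, rfl⟩⟩,
      ⟨_, step_withTape_ctrlMove_iff.2 ⟨rfl, rfl⟩⟩, ⟨_, step_withTape_ctrlRead_iff.2 ⟨rfl, rfl⟩⟩]
  tauStep_of_tr := by
    rintro _ _ _ _ _ (_ | ⟨e, mv, t, tp⟩ | ⟨mv, t, tp⟩ | ⟨t, tp⟩) hstep
    · obtain ⟨rfl, rfl⟩ := step_withTape_ctrlWrite_iff.1 hstep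
      exact ⟨rfl, .move mv t ⟨tp.left, e, tp.right⟩⟩
    · obtain ⟨rfl, rfl⟩ := step_withTape_ctrlMove_iff.1 hstep
      exact ⟨rfl, .read t _⟩
    · obtain ⟨rfl, rfl⟩ := step_withTape_ctrlRead_iff.1 hstep
      exact ⟨rfl, .idle t tp⟩
  not_final := by
    rintro _ _ _ (_ | ⟨e, mv, t, tp⟩ | ⟨mv, t, tp⟩ | ⟨t, tp⟩) <;> change ¬ Term _ _ <;>
      simp [withTape, ctrlWrite, ctrlMove, ctrlRead]

end FiniteControl

theorem RTM_dpbbisim_finite_control_with_tape_general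
    {C D B : Type} [Fintype D] [Fintype B] (cr cw cm : C)
    (M : RTM B D) :
    DPBranchingBisimilar
      (M.lts.relabel (CAct.base : B → CAct C (Sym D) B))
      (pLTS (EfcT (C := C) M cr cw cm)
        (.par {cr, cw, cm} (.name (.inl (M.init, (none : Option D))))
          (.name (.inr (Tape.empty D))))) :=
  (isTauExpansion_phase _).pLTS.dpBranchingBisimilar (Phase.idle M.init (Tape.empty D))

/-- For every reactive Turing machine `M`, the transition
system `T(M)` is divergence-preserving branching bisimilar to the LTS of the
parallel composition of `M`'s finite control with the (empty) tape process. -/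
theorem RTM_dpbbisim_finite_control_with_tape
    {C D B : Type} [Fintype D] [Fintype B] (cr cw cm : C)
    (hdist : List.Pairwise (· ≠ ·) [cr, cw, cm]) (M : RTM B D) :
    DPBranchingBisimilar
      (M.lts.relabel (CAct.base : B → CAct C (Sym D) B))
      (pLTS (EfcT (C := C) M cr cw cm)
        (.par {cr, cw, cm} (.name (.inl (M.init, (none : Option D))))
          (.name (.inr (Tape.empty D))))) :=
  RTM_dpbbisim_finite_control_with_tape_general cr cw cm M

end RTMPaper
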